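/- Let $M \colon V \to \mathrm{Mat}_{n,n+m}(\mathbb{C})$ be linear, and let $v, w \in V$, $\alpha_v, \alpha_w \in \mathbb{C}^n$ satisfy $M_v^t \cdot \alpha_v = 0$ and $M_w^t \cdot \alpha_w = 0$. Define the trilinear form $\omega(a, u, b) = a^t \cdot M_u \cdot b$ for $a \in \mathbb{C}^n$, $u \in V$, $b \in \mathbb{C}^{n+m}$. Then for every $a$ in the span of $\{\alpha_v, \alpha_w\}$, every $u$ in the span of $\{v, w\}$, and every $b \in \mathbb{C}^{n+m}$ orthogonal to both $M_v^t \cdot \alpha_w$ and $M_w^t \cdot \alpha_v$ (with respect to the standard bilinear pairing), one has $\omega(a, u, b) = 0$. -/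
import Mathlib


open Matrix

theorem stmt3 {V : Type*} [AddCommGroup V] [Module ℂ V]
    (n m : ℕ) (M : V →ₗ[ℂ] Matrix (Fin n) (Fin (n + m)) ℂ)
    (v w : V) (αv αw : Fin n → ℂ)
    (h1 : (M v)ᵀ.mulVec αv = 0) (h2 : (M w)ᵀ.mulVec αw = 0) :
    ∀ a ∈ Submodule.span ℂ {αv, αw}, ∀ u ∈ Submodule.span ℂ {v, w},
      ∀ b : Fin (n + m) → ℂ,
        ((M v)ᵀ.mulVec αw) ⬝ᵥ b = 0 → ((M w)ᵀ.mulVec αv) ⬝ᵥ b = 0 →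
          a ⬝ᵥ (M u).mulVec b = 0 := by
  intro a ha u hu b hb1 hb2
  rw [Submodule.mem_span_pair] at ha hu
  obtain ⟨c1, c2, rfl⟩ := ha
  obtain ⟨d1, d2, rfl⟩ := hu
  have key : ∀ (x : V) (α : Fin n → ℂ), α ⬝ᵥ (M x).mulVec b = ((M x)ᵀ.mulVec α) ⬝ᵥ b := by
    intro x α
    rw [Matrix.dotProduct_mulVec, ← Matrix.vecMul_transpose, Matrix.transpose_transpose]
  have e11 : αv ⬝ᵥ (M v).mulVec b = 0 := by rw [key, h1, zero_dotProduct]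
  have e22 : αw ⬝ᵥ (M w).mulVec b = 0 := by rw [key, h2, zero_dotProduct]
  have e12 : αw ⬝ᵥ (M v).mulVec b = 0 := by rw [key, hb1]
  have e21 : αv ⬝ᵥ (M w).mulVec b = 0 := by rw [key, hb2]
  simp only [map_add, _root_.map_smul, Matrix.add_mulVec, Matrix.smul_mulVec,
    dotProduct_add, add_dotProduct, smul_dotProduct,
    dotProduct_smul, e11, e12, e21, e22, smul_zero, add_zero]
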